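/- Let E be a Hilbert C*-module over a unital C*-algebra satisfying property [H], C ∈ K(E) compact, and L = I − C. Then the ascending chain of kernels stabilizes: there exists r ∈ ℕ such that Ker(L^r) = Ker(L^{r+1}), and consequently Ker(L^n) = Ker(L^r) for all n ≥ r. -/

import Mathlib

open scoped RightActions
open CStarModule Filter Topology

/-- The Hilbert C⋆-module class as it stood in Mathlib of December 2024 (right `A`-action via
`Aᵐᵒᵖ`, inner product `A`-linear on the right: `⟪x, y <• a⟫ = ⟪x, y⟫ * a`). -/
class OldCStarModule (A E : Type*) [NonUnitalSemiring A] [StarRing A] [Module ℂ A]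
    [AddCommGroup E] [Module ℂ E] [PartialOrder A] [SMul Aᵐᵒᵖ E] [Norm A] [Norm E]
    extends Inner A E where
  inner_add_right {x} {y} {z} : inner x (y + z) = inner x y + inner x z
  inner_self_nonneg {x} : 0 ≤ inner x x
  inner_self {x} : inner x x = 0 ↔ x = 0
  inner_op_smul_right {a : A} {x y : E} : inner x (y <• a) = inner x y * a
  inner_smul_right_complex {z : ℂ} {x} {y} : inner x (z • y) = z • inner x y
  star_inner x y : star (inner x y) = inner y x
  norm_eq_sqrt_norm_inner_self x : ‖x‖ = √‖inner x x‖

section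
variable (A E : Type*) [CStarAlgebra A] [PartialOrder A] [StarOrderedRing A]
  [NormedAddCommGroup E] [NormedSpace ℂ E] [Module Aᵐᵒᵖ E] [OldCStarModule A E]

/-- The rank-one operator predicate: `T = θ_{u,v}`, i.e. `T z = u⟪v, z⟫`. -/
def IsRankOne (T : E →L[ℂ] E) : Prop := ∃ u v : E, ∀ z, T z = u <• (inner (𝕜 := A) v z)

/-- The set `K(E)` of compact operators: the closure of the linear span of rank-one operators. -/
def compactOp : Set (E →L[ℂ] E) :=
  closure (Submodule.span ℂ {T : E →L[ℂ] E | IsRankOne A E T} : Set (E →L[ℂ] E))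

/-- Property [H]: every bounded sequence has a weakly convergent subsequence. -/
def PropertyH : Prop :=
  ∀ ζ : ℕ → E, Bornology.IsBounded (Set.range ζ) →
    ∃ φ : ℕ → ℕ, StrictMono φ ∧ ∃ z : E, ∀ v : E,
      Tendsto (fun k => inner (𝕜 := A) v (ζ (φ k))) atTop (nhds (inner (𝕜 := A) v z))

variable {A E}

lemma old_norm_sq_eq (x : E) : ‖x‖ ^ 2 = ‖inner (𝕜 := A) x x‖ := by
  rw [OldCStarModule.norm_eq_sqrt_norm_inner_self (A := A) x, Real.sq_sqrt (norm_nonneg _)]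

lemma old_inner_op_smul_left (a : A) (x y : E) :
    inner (𝕜 := A) (x <• a) y = star a * inner (𝕜 := A) x y := by
  rw [← OldCStarModule.star_inner (A := A) y (x <• a), OldCStarModule.inner_op_smul_right,
    star_mul, OldCStarModule.star_inner (A := A) y x]

/-- Norm inequality for the right action. -/
lemma my_norm_op_smul_le (x : E) (a : A) : ‖x <• a‖ ≤ ‖x‖ * ‖a‖ := by
  have h2 : ‖x <• a‖ ^ 2 ≤ (‖x‖ * ‖a‖) ^ 2 := by
    rw [old_norm_sq_eq (A := A)]
    calc ‖inner (𝕜 := A) (x <• a) (x <• a)‖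
        = ‖star a * (inner (𝕜 := A) x x * a)‖ := by
          rw [OldCStarModule.inner_op_smul_right, old_inner_op_smul_left, mul_assoc]
      _ ≤ ‖star a‖ * (‖inner (𝕜 := A) x x‖ * ‖a‖) :=
          (norm_mul_le _ _).trans (by gcongr; exact norm_mul_le _ _)
      _ = ‖a‖ * (‖x‖ ^ 2 * ‖a‖) := by rw [norm_star, ← old_norm_sq_eq]
      _ = (‖x‖ * ‖a‖) ^ 2 := by ring
  exact (pow_le_pow_iff_left₀ (norm_nonneg _) (by positivity) (by norm_num)).mp h2

/-- Compact operators map weakly convergent bounded sequences to norm convergent ones. -/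
lemma compact_tendsto {C : E →L[ℂ] E} (hC : C ∈ compactOp A E) {ζ : ℕ → E} {z : E}
    {M : ℝ} (hM : ∀ k, ‖ζ k‖ ≤ M) (hMz : ‖z‖ ≤ M)
    (hw : ∀ v : E, Tendsto (fun k => inner (𝕜 := A) v (ζ k)) atTop
      (nhds (inner (𝕜 := A) v z))) :
    Tendsto (fun k => C (ζ k)) atTop (nhds (C z)) := by
  have hM0 : 0 ≤ M := (norm_nonneg _).trans (hM 0)
  have hspan : ∀ T ∈ Submodule.span ℂ {T : E →L[ℂ] E | IsRankOne A E T},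
      Tendsto (fun k => T (ζ k)) atTop (nhds (T z)) := by
    intro T hT
    induction hT using Submodule.span_induction with
    | mem T hT =>
      obtain ⟨u, v, hu⟩ := hT
      simp only [hu]
      rw [tendsto_iff_norm_sub_tendsto_zero]
      have hb : ∀ k, ‖u <• (inner (𝕜 := A) v (ζ k)) - u <• (inner (𝕜 := A) v z)‖
          ≤ ‖u‖ * ‖inner (𝕜 := A) v (ζ k) - inner (𝕜 := A) v z‖ := by
        intro k
        have : u <• (inner (𝕜 := A) v (ζ k)) - u <• (inner (𝕜 := A) v z)
            = u <• (inner (𝕜 := A) v (ζ k) - inner (𝕜 := A) v z) := by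
          simp [sub_smul]
        rw [this]
        exact my_norm_op_smul_le u _
      refine squeeze_zero (fun k => norm_nonneg _) hb ?_
      have := (tendsto_sub_nhds_zero_iff.mpr (hw v)).norm.const_mul ‖u‖
      simpa using this
    | zero => simpa using tendsto_const_nhds
    | add f g _ _ hf hg => simpa using hf.add hg
    | smul c f _ hf => simpa using hf.const_smul c
  rw [Metric.tendsto_atTop]
  intro ε hε
  obtain ⟨T, hTspan, hCT⟩ := Metric.mem_closure_iff.mp hC (ε / 3 / (M + 1)) (by positivity)
  rw [dist_eq_norm] at hCT
  have h1 : ‖C - T‖ * (M + 1) < ε / 3 := by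
    rw [← lt_div_iff₀ (by positivity)]; exact hCT
  obtain ⟨N, hN⟩ := Metric.tendsto_atTop.mp (hspan T hTspan) (ε / 3) (by positivity)
  refine ⟨N, fun k hk => ?_⟩
  have hNk := hN k hk
  rw [dist_eq_norm] at hNk ⊢
  have key : C (ζ k) - C z = ((C - T) (ζ k)) + (T (ζ k) - T z) - ((C - T) z) := by
    rw [show (C - T) (ζ k) = C (ζ k) - T (ζ k) from rfl,
      show (C - T) z = C z - T z from rfl]
    abel
  rw [key]
  have b1 : ‖(C - T) (ζ k)‖ ≤ ‖C - T‖ * M := by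
    calc ‖(C - T) (ζ k)‖ ≤ ‖C - T‖ * ‖ζ k‖ := (C - T).le_opNorm _
      _ ≤ ‖C - T‖ * M := by gcongr; exact hM k
  have b2 : ‖(C - T) z‖ ≤ ‖C - T‖ * M := by
    calc ‖(C - T) z‖ ≤ ‖C - T‖ * ‖z‖ := (C - T).le_opNorm _
      _ ≤ ‖C - T‖ * M := by gcongr
  have hCTnn : 0 ≤ ‖C - T‖ := norm_nonneg _
  calc ‖((C - T) (ζ k)) + (T (ζ k) - T z) - ((C - T) z)‖
      ≤ ‖((C - T) (ζ k)) + (T (ζ k) - T z)‖ + ‖(C - T) z‖ := norm_sub_le _ _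
    _ ≤ ‖(C - T) (ζ k)‖ + ‖T (ζ k) - T z‖ + ‖(C - T) z‖ := by
        gcongr; exact norm_add_le _ _
    _ < ε := by nlinarith

/-- Kernels of powers increase. -/
lemma ker_pow_mono {L : E →L[ℂ] E} {a b : ℕ} (h : a ≤ b) {x : E} (hx : (L ^ a) x = 0) :
    (L ^ b) x = 0 := by
  obtain ⟨c, rfl⟩ := Nat.exists_eq_add_of_le h
  rw [add_comm, pow_add, ContinuousLinearMap.mul_apply, hx, map_zero]

/-- Riesz-lemma style construction of an almost orthogonal element. -/
lemma riesz_step {L : E →L[ℂ] E} {n : ℕ} {x : E} (hx1 : (L ^ (n + 1)) x = 0)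
    (hx2 : (L ^ n) x ≠ 0) :
    ∃ ζ : E, ‖ζ‖ = 1 ∧ (L ^ (n + 1)) ζ = 0 ∧
      ∀ w : E, (L ^ n) w = 0 → (1 : ℝ) / 2 ≤ ‖ζ - w‖ := by
  classical
  set S : Set E := {y : E | (L ^ n) y = 0} with hS
  have hS_closed : IsClosed S := isClosed_singleton.preimage (L ^ n).continuous
  have hS_ne : S.Nonempty := ⟨0, by simp [hS]⟩
  have hxS : x ∉ S := hx2
  set d : ℝ := Metric.infDist x S with hd
  have hd0 : 0 < d := (hS_closed.notMem_iff_infDist_pos hS_ne).mp hxS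
  have hlt : Metric.infDist x S < 2 * d := by linarith
  obtain ⟨y, hyS, hxy⟩ := (Metric.infDist_lt_iff hS_ne).mp hlt
  rw [dist_eq_norm] at hxy
  have hxy0 : x - y ≠ 0 := by
    intro h
    exact hxS (by rwa [show x = y from sub_eq_zero.mp h])
  have hn0 : (0 : ℝ) < ‖x - y‖ := norm_pos_iff.mpr hxy0
  refine ⟨‖x - y‖⁻¹ • (x - y), ?_, ?_, ?_⟩
  · rw [norm_smul, norm_inv, norm_norm, inv_mul_cancel₀ hn0.ne']
  · have hy1 : (L ^ (n + 1)) y = 0 := ker_pow_mono (Nat.le_succ n) hyS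
    rw [(L ^ (n + 1)).map_smul_of_tower, map_sub, hx1, hy1, sub_zero, smul_zero]
  · intro w hw
    have hmem : y + ‖x - y‖ • w ∈ S := by
      simp only [hS, Set.mem_setOf_eq, map_add, (L ^ n).map_smul_of_tower]
      rw [hyS, hw, smul_zero, add_zero]
    have hinf : d ≤ ‖x - (y + ‖x - y‖ • w)‖ := by
      rw [← dist_eq_norm]
      exact Metric.infDist_le_dist_of_mem hmem
    have e1 : ‖x - y‖⁻¹ • (x - y) - w = ‖x - y‖⁻¹ • (x - (y + ‖x - y‖ • w)) := by
      rw [smul_sub, smul_sub, smul_add, smul_smul, inv_mul_cancel₀ hn0.ne', one_smul, sub_sub]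
    rw [e1, norm_smul, norm_inv, norm_norm]
    have h12 : (1 : ℝ) / 2 ≤ ‖x - y‖⁻¹ * d := by
      rw [← div_eq_inv_mul, le_div_iff₀ hn0]
      nlinarith
    calc (1 : ℝ) / 2 ≤ ‖x - y‖⁻¹ * d := h12
      _ ≤ ‖x - y‖⁻¹ * ‖x - (y + ‖x - y‖ • w)‖ := by gcongr
  
variable (A E)

/-- the ascending chain of kernels of powers of `L = I − C` stabilizes. -/
theorem stmt8 [CompleteSpace E] (hH : PropertyH A E) (C : E →L[ℂ] E) (hC : C ∈ compactOp A E) :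
    ∃ r : ℕ, (∀ x : E, ((1 - C) ^ (r + 1)) x = 0 ↔ ((1 - C) ^ r) x = 0) ∧
      ∀ n ≥ r, ∀ x : E, ((1 - C) ^ n) x = 0 ↔ ((1 - C) ^ r) x = 0 := by
  set L : E →L[ℂ] E := 1 - C with hLdef
  by_cases hstab : ∃ r, ∀ x : E, (L ^ (r + 1)) x = 0 ↔ (L ^ r) x = 0
  · obtain ⟨r, hr⟩ := hstab
    refine ⟨r, hr, ?_⟩
    have step : ∀ m, ∀ x : E, (L ^ (r + 1 + m)) x = 0 → (L ^ (r + m)) x = 0 := by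
      intro m
      induction m with
      | zero => simpa using fun x hx => (hr x).mp hx
      | succ m ih =>
        intro x hx
        have hx' : (L ^ (r + 1 + m)) (L x) = 0 := by
          rw [← ContinuousLinearMap.mul_apply, ← pow_succ]
          rwa [show r + 1 + m + 1 = r + 1 + (m + 1) by ring]
        have := ih (L x) hx'
        rw [← ContinuousLinearMap.mul_apply, ← pow_succ] at this
        rwa [show r + m + 1 = r + (m + 1) by ring] at this
    have down : ∀ m, ∀ x : E, (L ^ (r + m)) x = 0 → (L ^ r) x = 0 := by
      intro m
      induction m with
      | zero => simp
      | succ m ih =>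
        intro x hx
        refine ih x (step m x ?_)
        rwa [show r + 1 + m = r + (m + 1) by ring]
    intro n hn x
    obtain ⟨m, rfl⟩ := Nat.exists_eq_add_of_le hn
    exact ⟨down m x, ker_pow_mono hn⟩
  · exfalso
    push_neg at hstab
    have hstrict : ∀ n, ∃ x : E, (L ^ (n + 1)) x = 0 ∧ (L ^ n) x ≠ 0 := by
      intro n
      obtain ⟨x, hx⟩ := hstab n
      rcases hx with ⟨h1, h2⟩ | ⟨h1, h2⟩
      · exact ⟨x, h1, h2⟩
      · exact absurd (ker_pow_mono (Nat.le_succ n) h2) h1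
    have hζ : ∀ n, ∃ ζ : E, ‖ζ‖ = 1 ∧ (L ^ (n + 1)) ζ = 0 ∧
        ∀ w : E, (L ^ n) w = 0 → (1 : ℝ) / 2 ≤ ‖ζ - w‖ := by
      intro n
      obtain ⟨x, h1, h2⟩ := hstrict n
      exact riesz_step h1 h2
    choose ζ hnorm hker hsep using hζ
    have hbdd : Bornology.IsBounded (Set.range ζ) := by
      rw [isBounded_iff_forall_norm_le]
      exact ⟨1, by rintro x ⟨n, rfl⟩; exact (hnorm n).le⟩
    obtain ⟨φ, hφ, z, hz⟩ := hH ζ hbdd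
    have htd : Tendsto (fun k => C (ζ (φ k))) atTop (nhds (C z)) := by
      refine compact_tendsto hC (M := max 1 ‖z‖) (fun k => ?_) (le_max_right _ _) hz
      rw [hnorm (φ k)]; exact le_max_left _ _
    have hcau := htd.cauchySeq
    rw [Metric.cauchySeq_iff] at hcau
    obtain ⟨N, hN⟩ := hcau (1 / 2) (by norm_num)
    have hlt := hN (N + 1) (Nat.le_succ N) N le_rfl
    set n' := φ (N + 1) with hn'
    set m' := φ N with hm'
    have hmn : m' + 1 ≤ n' := hφ (Nat.lt_succ_self N)
    have hwker : (L ^ n') (L (ζ n') + ζ m' - L (ζ m')) = 0 := by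
      have e1 : (L ^ n') (L (ζ n')) = 0 := by
        rw [← ContinuousLinearMap.mul_apply, ← pow_succ]
        exact hker n'
      have e2 : (L ^ n') (ζ m') = 0 := ker_pow_mono hmn (hker m')
      have e3 : (L ^ n') (L (ζ m')) = 0 := by
        rw [← ContinuousLinearMap.mul_apply, ← pow_succ]
        exact ker_pow_mono (by omega) (hker m')
      rw [map_sub, map_add, e1, e2, e3]
      simp
    have hsep' := hsep n' _ hwker
    have hCL : C = 1 - L := by rw [hLdef, sub_sub_cancel]
    have key : C (ζ n') - C (ζ m') = ζ n' - (L (ζ n') + ζ m' - L (ζ m')) := by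
      rw [hCL]
      simp only [ContinuousLinearMap.sub_apply, ContinuousLinearMap.one_apply]
      abel
    rw [dist_eq_norm, key] at hlt
    linarith
end
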